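/- Let A ∈ C^{n×n} and suppose there exist real numbers γ₁, …, γ_m and matrices A₁, …, A_m ∈ C^{n×n} with A = A_m A_{m−1} ⋯ A₁ such that Σ_{k=1}^m ( θ(e^{−iγ_k} A_k) ) + | Σ_{k=1}^m γ_k | < π, where θ denotes the singular angle. Then every eigenvalue λ of A satisfies λ ≠ −t for all t > 0 (i.e., no eigenvalue lies on the negative real axis), and in particular I + A is invertible. -/

import Mathlib

open scoped Matrix

noncomputable def evnorm {n : ℕ} (x : Fin n → ℂ) : ℝ :=
  Real.sqrt ((star x ⬝ᵥ x).re)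

noncomputable def qform {n : ℕ} (A : Matrix (Fin n) (Fin n) ℂ) (x : Fin n → ℂ) : ℂ :=
  star x ⬝ᵥ A.mulVec x

noncomputable def nnr {n : ℕ} (A : Matrix (Fin n) (Fin n) ℂ) : Set ℂ :=
  {z | ∃ x : Fin n → ℂ, x ≠ 0 ∧ A.mulVec x ≠ 0 ∧
    z = qform A x / ((evnorm x * evnorm (A.mulVec x) : ℝ) : ℂ)}

noncomputable def singAngle {n : ℕ} (A : Matrix (Fin n) (Fin n) ℂ) : ℝ :=
  sSup {θ : ℝ | ∃ x : Fin n → ℂ, x ≠ 0 ∧ A.mulVec x ≠ 0 ∧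
    θ = Real.arccos ((qform A x).re / (evnorm x * evnorm (A.mulVec x)))}

noncomputable def revProd {n m : ℕ} (A : Fin m → Matrix (Fin n) (Fin n) ℂ) :
    Matrix (Fin n) (Fin n) ℂ :=
  (List.ofFn A).reverse.prod

/-!
Rotating each factor by `e^{-iγ_k}` rotates the product `A` by `e^{-iΓ}`, `Γ = ∑ γ_k`. Since the
singular angle is subadditive along products (triangle inequality for angles between vectors),
`θ(e^{-iΓ} A) < π - |Γ|`. An eigenvalue `-t` of `A` gives the eigenvalue `-t e^{-iΓ}` of
`e^{-iΓ} A`, whose argument has modulus `π - |Γ|`; but the argument of a nonzero eigenvalue is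
the angle between an eigenvector and its image, hence bounded by the singular angle.
-/

open InnerProductGeometry Real
open scoped RealInnerProductSpace

lemma Complex.abs_arg_eq_arccos {z : ℂ} (hz : z ≠ 0) : |z.arg| = arccos (z.re / ‖z‖) := by
  rw [← Complex.cos_arg hz, ← cos_abs, arccos_cos (abs_nonneg _) (Complex.abs_arg_le_pi z)]

lemma abs_arg_exp_neg_mul_I_mul_neg {t Γ : ℝ} (ht : 0 < t) (hΓ : |Γ| ≤ π) :
    |(Complex.exp (-(Γ : ℂ) * Complex.I) * -(t : ℂ)).arg| = π - |Γ| := by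
  have hexp : Complex.exp (-(Γ : ℂ) * Complex.I) = Complex.exp ((-Γ : ℝ) * Complex.I) := by
    push_cast; rfl
  have hz : Complex.exp (-(Γ : ℂ) * Complex.I) * -(t : ℂ) ≠ 0 :=
    mul_ne_zero (Complex.exp_ne_zero _) (by exact_mod_cast neg_ne_zero.mpr ht.ne')
  have hcos : (Complex.exp (-(Γ : ℂ) * Complex.I) * -(t : ℂ)).re /
      ‖Complex.exp (-(Γ : ℂ) * Complex.I) * -(t : ℂ)‖ = -cos Γ := by
    rw [hexp, norm_mul, Complex.norm_exp_ofReal_mul_I, norm_neg, Complex.norm_real,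
      Real.norm_of_nonneg ht.le, ← Complex.ofReal_neg, Complex.re_mul_ofReal,
      Complex.exp_ofReal_mul_I_re, cos_neg, one_mul, mul_neg, neg_div,
      mul_div_cancel_right₀ _ ht.ne']
  rw [Complex.abs_arg_eq_arccos hz, hcos, arccos_neg, ← cos_abs, arccos_cos (abs_nonneg _) hΓ]

section SingularAngle

variable {n : ℕ}

/-- The angle for the real inner product `Re (star x ⬝ᵥ y)`, as in `singAngle`. -/
noncomputable def vecAngle (x y : Fin n → ℂ) : ℝ :=
  angle (WithLp.toLp 2 x : EuclideanSpace ℂ (Fin n)) (WithLp.toLp 2 y)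

lemma real_inner_toLp (x y : Fin n → ℂ) :
    ⟪(WithLp.toLp 2 x : EuclideanSpace ℂ (Fin n)), WithLp.toLp 2 y⟫ = (star x ⬝ᵥ y).re := by
  simp only [PiLp.inner_apply, dotProduct, Complex.re_sum, Complex.inner, Pi.star_apply,
    Complex.star_def]
  exact Finset.sum_congr rfl fun i _ => by rw [mul_comm]

lemma evnorm_eq_norm (x : Fin n → ℂ) :
    evnorm x = ‖(WithLp.toLp 2 x : EuclideanSpace ℂ (Fin n))‖ := by
  rw [evnorm, ← real_inner_toLp, real_inner_self_eq_norm_mul_norm, sqrt_mul_self (norm_nonneg _)]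

lemma evnorm_pos {x : Fin n → ℂ} (hx : x ≠ 0) : 0 < evnorm x := by
  rw [evnorm_eq_norm]
  simpa using hx

lemma evnorm_smul (c : ℂ) (x : Fin n → ℂ) : evnorm (c • x) = ‖c‖ * evnorm x := by
  rw [evnorm_eq_norm, evnorm_eq_norm, WithLp.toLp_smul, norm_smul]

lemma star_dotProduct_self (x : Fin n → ℂ) : star x ⬝ᵥ x = ((evnorm x ^ 2 : ℝ) : ℂ) := by
  have h := inner_self_eq_norm_sq_to_K (𝕜 := ℂ) (WithLp.toLp 2 x : EuclideanSpace ℂ (Fin n))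
  rw [EuclideanSpace.inner_toLp_toLp, dotProduct_comm] at h
  rw [h, evnorm_eq_norm]
  push_cast
  rfl

lemma vecAngle_eq_arccos (x y : Fin n → ℂ) :
    vecAngle x y = arccos ((star x ⬝ᵥ y).re / (evnorm x * evnorm y)) := by
  rw [vecAngle, angle, real_inner_toLp, evnorm_eq_norm, evnorm_eq_norm]

lemma vecAngle_le_vecAngle_add_vecAngle (x y z : Fin n → ℂ) :
    vecAngle x z ≤ vecAngle x y + vecAngle y z :=
  angle_le_angle_add_angle _ _ _

lemma vecAngle_smul_right_self {c : ℂ} (hc : c ≠ 0) {x : Fin n → ℂ} (hx : x ≠ 0) :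
    vecAngle x (c • x) = |c.arg| := by
  have hx' := evnorm_pos hx
  have hc' : 0 < ‖c‖ := norm_pos_iff.mpr hc
  rw [vecAngle_eq_arccos, dotProduct_smul, star_dotProduct_self, smul_eq_mul,
    Complex.re_mul_ofReal, evnorm_smul, Complex.abs_arg_eq_arccos hc]
  congr 1
  field_simp

lemma vecAngle_le_singAngle {M : Matrix (Fin n) (Fin n) ℂ} {x : Fin n → ℂ} (hx : x ≠ 0)
    (hMx : M *ᵥ x ≠ 0) : vecAngle x (M *ᵥ x) ≤ singAngle M :=
  le_csSup ⟨π, fun _ ⟨_, _, _, hθ⟩ => hθ ▸ arccos_le_pi _⟩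
    ⟨x, hx, hMx, by rw [vecAngle_eq_arccos, qform]⟩

lemma singAngle_le {M : Matrix (Fin n) (Fin n) ℂ} {a : ℝ} (ha : 0 ≤ a)
    (h : ∀ x, x ≠ 0 → M *ᵥ x ≠ 0 → vecAngle x (M *ᵥ x) ≤ a) : singAngle M ≤ a := by
  refine Real.sSup_le (fun _ ⟨x, hx, hMx, hθ⟩ => ?_) ha
  rw [hθ, qform, ← vecAngle_eq_arccos]
  exact h x hx hMx

lemma singAngle_nonneg (M : Matrix (Fin n) (Fin n) ℂ) : 0 ≤ singAngle M :=
  Real.sSup_nonneg fun _ ⟨_, _, _, hθ⟩ => hθ ▸ arccos_nonneg _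

lemma singAngle_one : singAngle (1 : Matrix (Fin n) (Fin n) ℂ) = 0 := by
  refine (singAngle_le le_rfl fun x hx _ => ?_).antisymm (singAngle_nonneg 1)
  rw [Matrix.one_mulVec, vecAngle, angle_self (by simpa using hx)]

lemma singAngle_mul_le (M N : Matrix (Fin n) (Fin n) ℂ) :
    singAngle (M * N) ≤ singAngle M + singAngle N := by
  refine singAngle_le (add_nonneg (singAngle_nonneg M) (singAngle_nonneg N)) fun x hx hMNx => ?_
  rw [← Matrix.mulVec_mulVec] at hMNx ⊢
  have hNx : N *ᵥ x ≠ 0 := fun h => hMNx (by rw [h, Matrix.mulVec_zero])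
  calc vecAngle x (M *ᵥ N *ᵥ x) ≤ vecAngle x (N *ᵥ x) + vecAngle (N *ᵥ x) (M *ᵥ N *ᵥ x) :=
        vecAngle_le_vecAngle_add_vecAngle _ _ _
    _ ≤ singAngle N + singAngle M :=
        add_le_add (vecAngle_le_singAngle hx hNx) (vecAngle_le_singAngle hNx hMNx)
    _ = singAngle M + singAngle N := add_comm _ _

lemma abs_arg_le_singAngle {M : Matrix (Fin n) (Fin n) ℂ} {μ : ℂ} (hμ : μ ≠ 0)
    (hμM : μ ∈ spectrum ℂ M) : |μ.arg| ≤ singAngle M := by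
  rw [← Matrix.spectrum_toLin', ← Module.End.hasEigenvalue_iff_mem_spectrum] at hμM
  obtain ⟨v, hv, hv0⟩ := hμM.exists_hasEigenvector
  rw [Module.End.mem_eigenspace_iff, Matrix.toLin'_apply] at hv
  rw [← vecAngle_smul_right_self hμ hv0, ← hv]
  exact vecAngle_le_singAngle hv0 (by rw [hv]; exact smul_ne_zero hμ hv0)

lemma revProd_succ {m : ℕ} (A : Fin (m + 1) → Matrix (Fin n) (Fin n) ℂ) :
    revProd A = revProd (fun k => A k.succ) * A 0 := by
  rw [revProd, List.ofFn_succ, List.reverse_cons, List.prod_append, List.prod_singleton, revProd]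

lemma revProd_smul {m : ℕ} (c : Fin m → ℂ) (A : Fin m → Matrix (Fin n) (Fin n) ℂ) :
    revProd (fun k => c k • A k) = (∏ k, c k) • revProd A := by
  induction m with
  | zero => simp [revProd]
  | succ m ih =>
    rw [revProd_succ, revProd_succ, ih, Fin.prod_univ_succ, smul_mul_smul_comm, mul_comm]

lemma singAngle_revProd_le {m : ℕ} (A : Fin m → Matrix (Fin n) (Fin n) ℂ) :
    singAngle (revProd A) ≤ ∑ k, singAngle (A k) := by
  induction m with
  | zero => simp [revProd, singAngle_one]
  | succ m ih =>
    rw [revProd_succ, Fin.sum_univ_succ]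
    linarith [singAngle_mul_le (revProd fun k => A k.succ) (A 0), ih fun k => A k.succ]

end SingularAngle

theorem stmt8 {n m : ℕ} (A : Matrix (Fin n) (Fin n) ℂ)
    (Ak : Fin m → Matrix (Fin n) (Fin n) ℂ) (γ : Fin m → ℝ)
    (hA : A = revProd Ak)
    (h : (∑ k, singAngle (Complex.exp (-(γ k : ℂ) * Complex.I) • Ak k)) +
        |∑ k, γ k| < Real.pi) :
    (∀ μ ∈ spectrum ℂ A, ∀ t : ℝ, 0 < t → μ ≠ -(t : ℂ)) ∧ IsUnit (1 + A) := by
  set Γ := ∑ k, γ k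
  set c := Complex.exp (-(Γ : ℂ) * Complex.I)
  have hc : c ≠ 0 := Complex.exp_ne_zero _
  have hrot : c • A = revProd (fun k => Complex.exp (-(γ k : ℂ) * Complex.I) • Ak k) := by
    rw [revProd_smul, ← Complex.exp_sum, hA]
    simp only [c, Γ, Complex.ofReal_sum, Finset.sum_mul, neg_mul, Finset.sum_neg_distrib]
  have hθ : singAngle (c • A) < π - |Γ| :=
    hrot ▸ (singAngle_revProd_le _).trans_lt (lt_sub_iff_add_lt.mpr h)
  have hnotneg : ∀ μ ∈ spectrum ℂ A, ∀ t : ℝ, 0 < t → μ ≠ -(t : ℂ) := by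
    rintro μ hμ t ht rfl
    have hcμ : c * -(t : ℂ) ∈ spectrum ℂ (c • A) := by
      simpa [Units.smul_def] using (spectrum.smul_mem_smul_iff (r := Units.mk0 c hc)).mpr hμ
    have harg :=
      abs_arg_le_singAngle (mul_ne_zero hc (by exact_mod_cast neg_ne_zero.mpr ht.ne')) hcμ
    rw [abs_arg_exp_neg_mul_I_mul_neg ht (by linarith [singAngle_nonneg (c • A)])] at harg
    linarith
  refine ⟨hnotneg, ?_⟩
  have hneg_one : (-1 : ℂ) ∉ spectrum ℂ A := fun hmem => hnotneg _ hmem 1 one_pos (by simp)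
  rwa [spectrum.notMem_iff, map_neg, map_one, ← neg_add', IsUnit.neg_iff] at hneg_one
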